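/- arXiv:2104.07074 — 2 statements merged into one kernel-verified Lean document; each statement's English description precedes it below -/
import Mathlib

section
/- Let V be a finite-dimensional complex vector space and let W ⊆ V be a subset that is both a Zariski-closed algebraic subset of V and a union of at most countably many linear subspaces of V. Then W is a finite union of linear subspaces of V. -/
/-!
Every linear subspace of `Kⁿ` is Zariski closed, so it suffices to show that, over an uncountable
algebraically closed field `K`, a Zariski-closed set covered by countably many Zariski-closed sets
`V(J j)` is covered by finitely many of them. Each of the finitely many minimal primes `P` of its
ideal contains some `J j`: otherwise pick `g j ∈ J j \ P`, adjoin inverses of all the `g j` to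
`K[X]/P` and pass to a maximal ideal. The residue field has countable dimension over `K`, hence is
`K` itself (a transcendental `t` would make the uncountably many `(t - a)⁻¹` linearly
independent), and so yields a point of `V(P)` at which no `g j` vanishes, which is absurd.
-/

open MvPolynomial Cardinal

theorem IsAlgClosed.algebraMap_bijective_of_rank_le_aleph0 {K L : Type*} [Field K] [IsAlgClosed K]
    [Uncountable K] [Field L] [Algebra K L] (hL : Module.rank K L ≤ ℵ₀) :
    Function.Bijective (algebraMap K L) := by
  have : Algebra.IsAlgebraic K L := by
    refine ⟨fun y => ?_⟩
    by_contra hy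
    have hK := (Transcendental.linearIndependent_sub_inv (F := K) (x := y) hy).cardinal_lift_le_rank
    exact not_countable (α := K)
      (mk_le_aleph0_iff.mp (lift_le_aleph0.mp (hK.trans (lift_le_aleph0.mpr hL))))
  exact algebraMap_bijective_of_isIntegral

namespace MvPolynomial

variable {K : Type*} [Field K]

theorem rank_quotient_le_aleph0 {τ : Type*} [Countable τ] (I : Ideal (MvPolynomial τ K)) :
    Module.rank K (MvPolynomial τ K ⧸ I) ≤ ℵ₀ :=
  calc Module.rank K (MvPolynomial τ K ⧸ I)
      ≤ Module.rank K (MvPolynomial τ K) :=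
        (Ideal.Quotient.mkₐ K I).toLinearMap.rank_le_of_surjective
          (Ideal.Quotient.mkₐ_surjective K I)
    _ = lift #(τ →₀ ℕ) := rank_eq_lift
    _ ≤ ℵ₀ := lift_le_aleph0.mpr mk_le_aleph0

variable [IsAlgClosed K] [Uncountable K]

theorem exists_mem_zeroLocus_of_isMaximal {τ : Type*} [Countable τ]
    (m : Ideal (MvPolynomial τ K)) [m.IsMaximal] : ∃ x : τ → K, x ∈ zeroLocus K m := by
  let _ : Field (MvPolynomial τ K ⧸ m) := Ideal.Quotient.field m
  let e : K ≃ₐ[K] MvPolynomial τ K ⧸ m := AlgEquiv.ofBijective (Algebra.ofId K _)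
    (IsAlgClosed.algebraMap_bijective_of_rank_le_aleph0 (L := MvPolynomial τ K ⧸ m)
      (rank_quotient_le_aleph0 m))
  refine ⟨fun i => e.symm (Ideal.Quotient.mk m (X i)), fun p hp => ?_⟩
  have h : aeval (fun i => e.symm (Ideal.Quotient.mk m (X i))) =
      e.symm.toAlgHom.comp (Ideal.Quotient.mkₐ K m) := by
    ext i; simp
  rw [h, AlgHom.comp_apply, Ideal.Quotient.mkₐ_eq_mk, Ideal.Quotient.eq_zero_iff_mem.mpr hp,
    map_zero]

theorem exists_mem_zeroLocus_forall_aeval_ne_zero {σ ι : Type*} [Countable σ] [Countable ι]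
    (P : Ideal (MvPolynomial σ K)) [P.IsPrime] (g : ι → MvPolynomial σ K) (hg : ∀ j, g j ∉ P) :
    ∃ x ∈ zeroLocus K P, ∀ j, aeval x (g j) ≠ 0 := by
  let F := FractionRing (MvPolynomial σ K ⧸ P)
  let ψ : MvPolynomial σ K →ₐ[K] F :=
    (IsScalarTower.toAlgHom K (MvPolynomial σ K ⧸ P) F).comp (Ideal.Quotient.mkₐ K P)
  have hψ : ∀ p, ψ p = 0 ↔ p ∈ P := fun p => by
    simp [ψ, Ideal.Quotient.eq_zero_iff_mem]
  -- Rabinowitsch's trick: `X (inr j)` is forced to be an inverse of `g j`; `I` is proper because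
  -- it is killed by the map to the fraction field of `K[X]/P` sending `X (inr j)` to `(g j)⁻¹`.
  let I : Ideal (MvPolynomial (σ ⊕ ι) K) := P.map (rename Sum.inl) ⊔
    Ideal.span (Set.range fun j => rename Sum.inl (g j) * X (Sum.inr j) - 1)
  let φ : MvPolynomial (σ ⊕ ι) K →ₐ[K] F := aeval (Sum.elim (ψ ∘ X) fun j => (ψ (g j))⁻¹)
  have hφ : ∀ p, φ (rename Sum.inl p) = ψ p := fun p => by
    rw [aeval_rename, Sum.elim_comp_inl, ← congr($(aeval_unique ψ) p)]
  have hIφ : I ≤ RingHom.ker φ := by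
    refine sup_le (Ideal.map_le_iff_le_comap.mpr fun p hp => ?_) (Ideal.span_le.mpr ?_)
    · simp [RingHom.mem_ker, hφ, (hψ p).mpr hp]
    · rintro _ ⟨j, rfl⟩
      simp [RingHom.mem_ker, hφ, φ, mul_inv_cancel₀ (mt (hψ _).mp (hg j))]
  have hI : I ≠ ⊤ := fun h => by simpa using hIφ (h ▸ Submodule.mem_top : (1 : _) ∈ I)
  obtain ⟨m, hm, hIm⟩ := I.exists_le_maximal hI
  obtain ⟨y, hy⟩ := exists_mem_zeroLocus_of_isMaximal m
  have hy' : ∀ p ∈ I, aeval y p = 0 := fun p hp => hy p (hIm hp)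
  refine ⟨y ∘ Sum.inl, fun p hp => ?_, fun j hj => ?_⟩
  · rw [← aeval_rename]
    exact hy' _ (Ideal.mem_sup_left (Ideal.mem_map_of_mem _ hp))
  · have := hy' _ (Ideal.mem_sup_right (Ideal.subset_span ⟨j, rfl⟩))
    simp only [map_sub, map_mul, aeval_rename, hj, zero_mul, zero_sub, map_one, neg_eq_zero,
      one_ne_zero] at this

theorem exists_finset_zeroLocus_subset_biUnion {σ ι : Type*} [Finite σ] [Countable ι]
    (I : Ideal (MvPolynomial σ K)) (J : ι → Ideal (MvPolynomial σ K))
    (hIJ : zeroLocus K I ⊆ ⋃ j, zeroLocus K (J j)) :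
    ∃ s : Finset ι, zeroLocus K I ⊆ ⋃ j ∈ s, zeroLocus K (J j) := by
  classical
  have hP : ∀ P ∈ I.minimalPrimes, ∃ j, J j ≤ P := by
    intro P hP
    have : P.IsPrime := hP.1.1
    by_contra! hJP
    choose g hgJ hgP using fun j => SetLike.not_le_iff_exists.mp (hJP j)
    obtain ⟨x, hxP, hxg⟩ := exists_mem_zeroLocus_forall_aeval_ne_zero P g hgP
    obtain ⟨j, hxj⟩ := Set.mem_iUnion.mp (hIJ (zeroLocus_anti_mono hP.1.2 hxP))
    exact hxg j (hxj _ (hgJ j))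
  choose j hj using hP
  have : Finite I.minimalPrimes := I.finite_minimalPrimes_of_isNoetherianRing
  cases nonempty_fintype I.minimalPrimes
  refine ⟨Finset.univ.image fun P : I.minimalPrimes => j P.1 P.2, fun x hx => ?_⟩
  have hIx : I ≤ vanishingIdeal K {x} :=
    le_zeroLocus_iff_le_vanishingIdeal.mp (Set.singleton_subset_iff.mpr hx)
  obtain ⟨P, hP, hPx⟩ := Ideal.exists_minimalPrimes_le hIx
  refine Set.mem_biUnion (Finset.mem_image_of_mem _ (Finset.mem_univ ⟨P, hP⟩)) ?_
  exact Set.singleton_subset_iff.mp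
    (le_zeroLocus_iff_le_vanishingIdeal.mpr ((hj P hP).trans hPx))

end MvPolynomial

theorem Submodule.zeroLocus_vanishingIdeal {K σ : Type*} [Field K] [Fintype σ]
    (U : Submodule K (σ → K)) : zeroLocus K (vanishingIdeal K (U : Set (σ → K))) = U := by
  classical
  refine subset_antisymm (fun x hx => ?_) (zeroLocus_vanishingIdeal_le _)
  by_contra hxU
  obtain ⟨f, hfx, hUf⟩ := Submodule.exists_le_ker_of_notMem hxU
  let p : MvPolynomial σ K := ∑ i, C (f (Pi.single i 1)) * X i
  have hp : ∀ y, aeval y p = f y := fun y => by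
    rw [f.pi_apply_eq_sum_univ y, map_sum]
    refine Finset.sum_congr rfl fun i _ => ?_
    simp only [map_mul, aeval_C, aeval_X, Algebra.algebraMap_self, RingHom.id_apply, smul_eq_mul,
      mul_comm]
    congr 2
    ext j
    simp [Pi.single_apply, eq_comm]
  exact hfx (hp x ▸ hx p fun y hy => (hp y).trans (hUf hy))

theorem stmt0 (n : ℕ) (W : Set (Fin n → ℂ))
    (halg : ∃ S : Set (MvPolynomial (Fin n) ℂ),
      W = {v | ∀ p ∈ S, MvPolynomial.eval v p = 0})
    (hcount : ∃ f : ℕ → Submodule ℂ (Fin n → ℂ), W = ⋃ i, (f i : Set (Fin n → ℂ))) :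
    ∃ s : Finset (Submodule ℂ (Fin n → ℂ)),
      W = ⋃ U ∈ s, (U : Set (Fin n → ℂ)) := by
  have : Uncountable ℂ := Complex.ofReal_injective.uncountable
  obtain ⟨S, hS⟩ := halg
  obtain ⟨f, rfl⟩ := hcount
  have hW : ⋃ i, (f i : Set (Fin n → ℂ)) = zeroLocus ℂ (Ideal.span S) := by
    simp [hS, zeroLocus_span]
  obtain ⟨s, hs⟩ := exists_finset_zeroLocus_subset_biUnion (Ideal.span S)
    (fun i => vanishingIdeal ℂ (f i : Set (Fin n → ℂ)))
    (by simp only [← hW, Submodule.zeroLocus_vanishingIdeal]; rfl)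
  refine ⟨s.image f, ?_⟩
  rw [Finset.set_biUnion_finset_image]
  refine subset_antisymm ?_ (Set.iUnion₂_subset_iUnion _ _)
  rw [hW]
  simpa only [Submodule.zeroLocus_vanishingIdeal] using hs
end

section
/- Let A be a complex abelian variety and Z ⊆ A a positive-dimensional closed subvariety that is fibred by a nontrivial abelian subvariety B ⊆ A (i.e., Z + B = Z). Then there exists a nonzero holomorphic 1-form ω on A (equivalently, a nonzero translation-invariant 1-form) whose restriction to the smooth locus of Z has no zeros. -/
open Filter

theorem Submodule.coe_subset_tangentConeAt_of_add_mem {𝕜 E : Type*} [NontriviallyNormedField 𝕜]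
    [NormedAddCommGroup E] [NormedSpace 𝕜 E] {s : Set E} {x : E} (W : Submodule 𝕜 E)
    (hs : ∀ w ∈ W, x + w ∈ s) : (W : Set E) ⊆ tangentConeAt 𝕜 s x := by
  intro w hw
  obtain ⟨r, hr₀, hr₁⟩ := NormedField.exists_norm_lt_one 𝕜
  exact mem_tangentConeAt_of_pow_smul (norm_pos_iff.mp hr₀) hr₁
    (Eventually.of_forall fun n ↦ hs _ (W.smul_mem _ hw))

theorem stmt5_general (V : Type*) [NormedAddCommGroup V] [NormedSpace ℂ V]
    (Z : Set V)
    (W : Submodule ℂ V) (hW : W ≠ ⊥)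
    (hfib : ∀ z ∈ Z, ∀ w ∈ W, z + w ∈ Z) :  -- Z + B = Z
    ∃ ω : V →L[ℂ] ℂ, ω ≠ 0 ∧
      ∀ z ∈ Z, ¬ (∀ u ∈ tangentConeAt ℂ Z z, ω u = 0) := by
  obtain ⟨w, hwW, hw₀⟩ := Submodule.exists_mem_ne_zero_of_ne_bot hW
  obtain ⟨ω, hωw⟩ := SeparatingDual.exists_ne_zero (R := ℂ) hw₀
  refine ⟨ω, fun hω ↦ hωw (by simp [hω]), fun z hz hvanish ↦ hωw (hvanish w ?_)⟩
  exact W.coe_subset_tangentConeAt_of_add_mem (hfib z hz) hwW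

theorem stmt5 (V : Type*) [NormedAddCommGroup V] [NormedSpace ℂ V] [FiniteDimensional ℂ V]
    (Z : Set V) (hZne : Z.Nonempty)
    (W : Submodule ℂ V) (hW : W ≠ ⊥)
    (hfib : ∀ z ∈ Z, ∀ w ∈ W, z + w ∈ Z) :  -- Z + B = Z
    ∃ ω : V →L[ℂ] ℂ, ω ≠ 0 ∧
      ∀ z ∈ Z, ¬ (∀ u ∈ tangentConeAt ℂ Z z, ω u = 0) :=
  stmt5_general V Z W hW hfib
end
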